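/- For every acceptor A, the non-empty repetition A⁺ satisfies: w ∈ L(A⁺) if and only if there exist k ≥ 1 and words w₁,...,w_k ∈ L(A) with w = w₁⋯w_k. -/

import Mathlib

/-- A border function on a well-ordered alphabet, viewed as a finite set of ordered pairs
(a functional finite graph) that is defined at least for the minimal symbol `⊥`. -/
structure BorderFun (α : Type*) [LinearOrder α] [OrderBot α] (D : Type*) where
  graph : Finset (α × D)
  functional : ∀ p ∈ graph, ∀ q ∈ graph, p.1 = q.1 → p.2 = q.2
  bot_mem : ∃ d, (⊥, d) ∈ graph

namespace BorderFun
open Classical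

variable {α : Type*} [LinearOrder α] [OrderBot α] {D D' D₁ D₂ : Type*}

/-- The domain of a border function. -/
def dom (φ : BorderFun α D) : Finset α := φ.graph.image Prod.fst

lemma filter_nonempty (φ : BorderFun α D) (σ : α) :
    (φ.dom.filter (fun τ => τ ≤ σ)).Nonempty := by
  obtain ⟨d, hd⟩ := φ.bot_mem
  exact ⟨⊥, Finset.mem_filter.mpr ⟨Finset.mem_image.mpr ⟨(⊥, d), hd, rfl⟩, bot_le⟩⟩

/-- `σ^≤`: the greatest element of the domain that is `≤ σ`. -/
def maxLe (φ : BorderFun α D) (σ : α) : α :=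
  (φ.dom.filter (fun τ => τ ≤ σ)).max' (φ.filter_nonempty σ)

lemma exists_leVal (φ : BorderFun α D) (σ : α) : ∃ d, (φ.maxLe σ, d) ∈ φ.graph := by
  have h := Finset.max'_mem _ (φ.filter_nonempty σ)
  have h2 := (Finset.mem_filter.mp h).1
  obtain ⟨p, hp, hfst⟩ := Finset.mem_image.mp h2
  exact ⟨p.2, by rw [show φ.maxLe σ = p.1 from hfst.symm]; exact hp⟩

/-- `φ^≤(σ)`: the value of `φ` at the greatest domain element `≤ σ`. -/
noncomputable def leVal (φ : BorderFun α D) (σ : α) : D :=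
  Classical.choose (φ.exists_leVal σ)

/-- Two border functions are equivalent if they induce the same total function `φ^≤`. -/
def Equiv (φ ψ : BorderFun α D) : Prop := ∀ σ, φ.leVal σ = ψ.leVal σ

/-- The minimization of a border function: remove every border whose immediate
predecessor border carries the same value. -/
noncomputable def minimize (φ : BorderFun α D) : BorderFun α D where
  graph := φ.graph.filter (fun p => ∀ q ∈ φ.graph, q.1 < p.1 →
    (∀ r ∈ φ.graph, ¬(q.1 < r.1 ∧ r.1 < p.1)) → q.2 ≠ p.2)
  functional := fun p hp q hq =>
    φ.functional p (Finset.mem_of_mem_filter p hp) q (Finset.mem_of_mem_filter q hq)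
  bot_mem := by
    obtain ⟨d, hd⟩ := φ.bot_mem
    exact ⟨d, Finset.mem_filter.mpr ⟨hd, fun q hq hlt => absurd hlt (not_lt_bot)⟩⟩

/-- Pointwise application of a function to the values of a border function (without minimization). -/
noncomputable def map (f : D → D') (φ : BorderFun α D) : BorderFun α D' where
  graph := φ.graph.image (fun p => (p.1, f p.2))
  functional := by
    intro p hp q hq h
    obtain ⟨a, ha, rfl⟩ := Finset.mem_image.mp hp
    obtain ⟨b, hb, rfl⟩ := Finset.mem_image.mp hq
    simp only at h ⊢
    rw [φ.functional a ha b hb h]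
  bot_mem := by
    obtain ⟨d, hd⟩ := φ.bot_mem
    exact ⟨f d, Finset.mem_image.mpr ⟨(⊥, d), hd, rfl⟩⟩

/-- The application of `f` on `φ`: the minimization of the pointwise image. -/
noncomputable def appF (f : D → D') (φ : BorderFun α D) : BorderFun α D' :=
  (φ.map f).minimize

/-- The product of two border functions. -/
noncomputable def prod (φ₁ : BorderFun α D₁) (φ₂ : BorderFun α D₂) :
    BorderFun α (D₁ × D₂) where
  graph := (φ₁.dom ∪ φ₂.dom).image (fun σ => (σ, (φ₁.leVal σ, φ₂.leVal σ)))
  functional := by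
    intro p hp q hq h
    obtain ⟨a, ha, rfl⟩ := Finset.mem_image.mp hp
    obtain ⟨b, hb, rfl⟩ := Finset.mem_image.mp hq
    simp only at h ⊢
    subst h
    rfl
  bot_mem := by
    obtain ⟨d, hd⟩ := φ₁.bot_mem
    exact ⟨_, Finset.mem_image.mpr ⟨⊥,
      Finset.mem_union_left _ (Finset.mem_image.mpr ⟨(⊥, d), hd, rfl⟩), rfl⟩⟩

/-- The constant border function with the single border `(⊥, d)`. -/
def botFun (d : D) : BorderFun α D :=
  ⟨{(⊥, d)}, by
    intro p hp q hq _
    simp only [Finset.mem_singleton] at hp hq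
    rw [hp, hq], ⟨d, by simp⟩⟩

end BorderFun

/-- An acceptor: a flat list of states, each consisting of a set of relative
ε-transitions and a border function giving relative symbol transitions
(`none` = `#`, no transition). State `i` (1-indexed) is `states[i-1]`;
the initial state is `1` and the accepting state is `length + 1`. -/
abbrev Acceptor (α : Type*) [LinearOrder α] [OrderBot α] :=
  List (Finset ℤ × BorderFun α (Option ℤ))

namespace Acceptor

variable {α : Type*} [LinearOrder α] [OrderBot α]

/-- The committing condition: no transitions to states `< 2` or `> n + 1`. -/
def Valid (M : Acceptor α) : Prop :=
  ∀ i (hi : i < M.length),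
    (∀ j ∈ (M.get ⟨i, hi⟩).1,
        2 ≤ (i + 1 : ℤ) + j ∧ (i + 1 : ℤ) + j ≤ (M.length : ℤ) + 1) ∧
    (∀ p ∈ (M.get ⟨i, hi⟩).2.graph, ∀ j : ℤ, p.2 = some j →
        2 ≤ (i + 1 : ℤ) + j ∧ (i + 1 : ℤ) + j ≤ (M.length : ℤ) + 1)

/-- The transition relation on configurations `(state, word read so far)`. -/
inductive Step (M : Acceptor α) : ℤ × List α → ℤ × List α → Prop
  | eps {i : ℕ} (hi : i < M.length) {j : ℤ} (hj : j ∈ (M.get ⟨i, hi⟩).1) (w : List α) :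
      Step M ((i : ℤ) + 1, w) ((i : ℤ) + 1 + j, w)
  | symb {i : ℕ} (hi : i < M.length) {σ : α} {j : ℤ}
      (hj : (M.get ⟨i, hi⟩).2.leVal σ = some j) (w : List α) :
      Step M ((i : ℤ) + 1, w) ((i : ℤ) + 1 + j, w ++ [σ])

/-- `M` accepts `w` iff `(1, ε) ⊢* (‖M‖ + 1, w)`. -/
def Accepts (M : Acceptor α) (w : List α) : Prop :=
  Relation.ReflTransGen (Step M) (1, []) ((M.length : ℤ) + 1, w)

/-- The language of an acceptor. -/
def Lang (M : Acceptor α) : Set (List α) := {w | M.Accepts w}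

/-- The acceptor `A_ε`, which is the empty sequence. -/
def epsA : Acceptor α := []

/-- The one-state acceptor `A_∅` accepting nothing. -/
def emptyA : Acceptor α := [(∅, BorderFun.botFun none)]

/-- `M{i →^ε j}`: add the relative ε-transition `j - i` to state `i`. -/
def addEps (M : Acceptor α) (i j : ℤ) : Acceptor α :=
  M.modify (i - 1).toNat (fun p => (insert (j - i) p.1, p.2))

/-- The union `M₁ | M₂ := (M₁ ∘ A_∅ ∘ M₂){1 →^ε ‖M₁‖+2, ‖M₁‖+1 →^ε ‖M₁‖+‖M₂‖+2}`. -/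
def union (M₁ M₂ : Acceptor α) : Acceptor α :=
  addEps (addEps (M₁ ++ emptyA ++ M₂) 1 ((M₁.length : ℤ) + 2))
    ((M₁.length : ℤ) + 1) ((M₁.length : ℤ) + (M₂.length : ℤ) + 2)

/-- The Kleene star
`M* := (A_∅ ∘ M ∘ A_∅){1 →^ε 2, 2 →^ε ‖M‖+3, ‖M‖+2 →^ε 2}`. -/
def star (M : Acceptor α) : Acceptor α :=
  addEps (addEps (addEps (emptyA ++ M ++ emptyA) 1 2) 2 ((M.length : ℤ) + 3))
    ((M.length : ℤ) + 2) 2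

/-- The non-empty repetition
`M⁺ := (A_∅ ∘ M ∘ A_∅){1 →^ε 2, ‖M‖+2 →^ε 2, ‖M‖+2 →^ε ‖M‖+3}`. -/
def plus (M : Acceptor α) : Acceptor α :=
  addEps (addEps (addEps (emptyA ++ M ++ emptyA) 1 2) ((M.length : ℤ) + 2) 2)
    ((M.length : ℤ) + 2) ((M.length : ℤ) + 3)

/-- The optional acceptor `M? := M{1 →^ε ‖M‖+1}`. -/
def opt (M : Acceptor α) : Acceptor α := addEps M 1 ((M.length : ℤ) + 1)

end Acceptor

/-! States `1` and `‖A‖+2` of `A⁺` are the two copies of `A_∅`, which read nothing, and states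
`2, …, ‖A‖+1` are a copy of `A` shifted by one; so a step of `A⁺` is the entry `1 → 2`, a shifted
step of `A`, or one of the exits `‖A‖+2 → 2`, `‖A‖+2 → ‖A‖+3` (`Acceptor.step_plus_iff`).
Since `A` is committing, a run of the copy entered at `2` stays in `2, …, ‖A‖+2`, and it can only
leave through `‖A‖+2`, i.e. after a complete accepting run of `A`. Hence the runs of `A⁺` are
accepting runs of `A` chained by the loop back to `2`, and the word read is their concatenation. -/

lemma List.modify_length_append_singleton {β : Type*} (l : List β) (a : β) (f : β → β) :
    (l ++ [a]).modify l.length f = l ++ [f a] := by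
  induction l <;> simp_all

namespace BorderFun

variable {α : Type*} [LinearOrder α] [OrderBot α] {D : Type*}

lemma leVal_mem (φ : BorderFun α D) (σ : α) : (φ.maxLe σ, φ.leVal σ) ∈ φ.graph :=
  Classical.choose_spec (φ.exists_leVal σ)

@[simp]
lemma botFun_leVal (d : D) (σ : α) : (botFun d : BorderFun α D).leVal σ = d :=
  congrArg Prod.snd (Finset.mem_singleton.mp (leVal_mem (botFun d : BorderFun α D) σ))

end BorderFun

namespace Acceptor

open Relation

variable {α : Type*} [LinearOrder α] [OrderBot α]

def StateStep (q : Finset ℤ × BorderFun α (Option ℤ)) (j : ℤ) (w w' : List α) : Prop :=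
  j ∈ q.1 ∧ w' = w ∨ ∃ σ, q.2.leVal σ = some j ∧ w' = w ++ [σ]

lemma stateStep_botFun_none {E : Finset ℤ} {j : ℤ} {w w' : List α} :
    StateStep (E, BorderFun.botFun none) j w w' ↔ j ∈ E ∧ w' = w := by
  simp [StateStep]

lemma step_iff {N : Acceptor α} {s t : ℤ} {w w' : List α} :
    Step N (s, w) (t, w') ↔
      ∃ (i : ℕ) (hi : i < N.length), s = i + 1 ∧ StateStep N[i] (t - s) w w' := by
  constructor
  · rintro (⟨hi, hj, _⟩ | ⟨hi, hj, _⟩)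
    · exact ⟨_, hi, rfl, .inl ⟨by simpa using hj, rfl⟩⟩
    · exact ⟨_, hi, rfl, .inr ⟨_, by simpa using hj, rfl⟩⟩
  · rintro ⟨i, hi, rfl, ⟨hj, rfl⟩ | ⟨σ, hj, rfl⟩⟩
    · simpa using Step.eps hi (j := t - (i + 1)) (by simpa using hj) _
    · simpa using Step.symb hi (j := t - (i + 1)) (by simpa using hj) _

lemma Step.state_bounds {N : Acceptor α} {c d : ℤ × List α} (h : Step N c d) :
    1 ≤ c.1 ∧ c.1 ≤ N.length := by
  cases h <;> omega

lemma Valid.step_bounds {N : Acceptor α} (hN : Valid N) {c d : ℤ × List α} (h : Step N c d) :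
    2 ≤ d.1 ∧ d.1 ≤ N.length + 1 := by
  cases h with
  | eps hi hj => exact (hN _ hi).1 _ hj
  | symb hi hj => exact (hN _ hi).2 _ (BorderFun.leVal_mem _ _) _ hj

lemma Step.append_left {N : Acceptor α} {s t : ℤ} {w w' : List α} (v : List α)
    (h : Step N (s, w) (t, w')) : Step N (s, v ++ w) (t, v ++ w') := by
  cases h with
  | eps hi hj => exact Step.eps hi hj _
  | symb hi hj => simpa using Step.symb hi hj (v ++ w)

lemma Step.of_append_left {N : Acceptor α} {s t : ℤ} {v w w'' : List α}
    (h : Step N (s, v ++ w) (t, w'')) : ∃ w', w'' = v ++ w' ∧ Step N (s, w) (t, w') := by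
  cases h with
  | eps hi hj => exact ⟨w, rfl, Step.eps hi hj w⟩
  | symb hi hj => exact ⟨w ++ [_], by simp, Step.symb hi hj w⟩

lemma exists_eq_append_of_reflTransGen {N : Acceptor α} {s t : ℤ} {v w : List α}
    (h : ReflTransGen (Step N) (s, v) (t, w)) :
    ∃ u, w = v ++ u ∧ ReflTransGen (Step N) (s, []) (t, u) := by
  suffices ∀ c, ReflTransGen (Step N) (s, v) c →
      ∃ u, c.2 = v ++ u ∧ ReflTransGen (Step N) (s, []) (c.1, u) from this _ h
  intro c hc
  induction hc with
  | refl => exact ⟨[], by simp, .refl⟩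
  | @tail b c _ hstep ih =>
    obtain ⟨u, hu, hrun⟩ := ih
    obtain ⟨sb, wb⟩ := b
    obtain ⟨sc, wc⟩ := c
    dsimp only at hu hrun ⊢
    subst hu
    obtain ⟨u', rfl, hstep'⟩ := hstep.of_append_left
    exact ⟨u', rfl, hrun.tail hstep'⟩

section Plus

variable (M : Acceptor α)

lemma plus_eq : plus M =
    (({1} : Finset ℤ), BorderFun.botFun none) :: M ++
      [(({1, -(M.length : ℤ)} : Finset ℤ), BorderFun.botFun none)] := by
  have hlast : ((M.length : ℤ) + 2 - 1).toNat = M.length + 1 := by omega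
  simp [plus, addEps, emptyA, hlast, List.modify_length_append_singleton]

lemma plus_length : (plus M).length = M.length + 2 := by
  simp [plus_eq]

lemma getElem_plus_zero :
    (plus M)[0]'(by simp [plus_length]) = (({1} : Finset ℤ), BorderFun.botFun none) := by
  simp [plus_eq]

lemma getElem_plus_length_add_one :
    (plus M)[M.length + 1]'(by simp [plus_length]) =
      (({1, -(M.length : ℤ)} : Finset ℤ), BorderFun.botFun none) := by
  simp [plus_eq]

variable {M}

lemma getElem_plus_succ {i : ℕ} (hi : i < M.length) :
    (plus M)[i + 1]'(by simp [plus_length]; omega) = M[i] := by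
  simp [plus_eq, List.getElem_append_left, hi]

lemma step_plus_iff {s t : ℤ} {w w' : List α} :
    Step (plus M) (s, w) (t, w') ↔
      (s = 1 ∧ t = 2 ∧ w' = w) ∨ Step M (s - 1, w) (t - 1, w') ∨
        (s = M.length + 2 ∧ (t = 2 ∨ t = M.length + 3) ∧ w' = w) := by
  simp only [step_iff, plus_length]
  constructor
  · rintro ⟨_ | i, hi, rfl, hst⟩
    · simp only [getElem_plus_zero, stateStep_botFun_none, Finset.mem_singleton,
        Nat.cast_zero, zero_add] at hst
      exact .inl ⟨by simp, by linarith [hst.1], hst.2⟩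
    · by_cases hiM : i < M.length
      · rw [getElem_plus_succ hiM] at hst
        refine .inr (.inl ⟨i, hiM, by push_cast; ring, ?_⟩)
        rwa [show t - 1 - ((i + 1 : ℕ) + 1 - 1 : ℤ) = t - ((i + 1 : ℕ) + 1) by ring]
      · obtain rfl : i = M.length := by omega
        simp only [getElem_plus_length_add_one, stateStep_botFun_none, Finset.mem_insert,
          Finset.mem_singleton] at hst
        refine .inr (.inr ⟨by push_cast; ring, ?_, hst.2⟩)
        push_cast at hst
        omega
  · rintro (⟨rfl, rfl, rfl⟩ | ⟨i, hi, hs, hst⟩ | ⟨rfl, ht, rfl⟩)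
    · exact ⟨0, by omega, by simp, by simp [getElem_plus_zero, stateStep_botFun_none]⟩
    · refine ⟨i + 1, by omega, by push_cast; linarith, ?_⟩
      rwa [getElem_plus_succ hi, show t - s = t - 1 - (s - 1) by ring]
    · refine ⟨M.length + 1, by omega, by push_cast; ring, ?_⟩
      simp only [getElem_plus_length_add_one, stateStep_botFun_none, Finset.mem_insert,
        Finset.mem_singleton, and_true]
      omega

lemma reflTransGen_plus_of_mem_lang {u : List α} (hu : u ∈ Lang M) (v : List α) :
    ReflTransGen (Step (plus M)) (2, v) (M.length + 2, v ++ u) := by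
  have hlift := ReflTransGen.lift (fun c : ℤ × List α => (c.1 + 1, v ++ c.2))
    (fun ⟨_, _⟩ ⟨_, _⟩ h => step_plus_iff.2 (.inr (.inl (by simpa using h.append_left v))))
    _ _ (show Accepts M u from hu)
  convert hlift using 2
  · norm_num
  · simp
  · ring

lemma reflTransGen_plus_of_forall_mem_lang {u : List α} {ws : List (List α)}
    (hws : ∀ x ∈ u :: ws, x ∈ Lang M) (v : List α) :
    ReflTransGen (Step (plus M)) (2, v) (M.length + 2, v ++ (u :: ws).flatten) := by
  induction ws generalizing u v with
  | nil => simpa using reflTransGen_plus_of_mem_lang (hws u List.mem_cons_self) v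
  | cons u' ws ih =>
    have hblock := reflTransGen_plus_of_mem_lang (hws u List.mem_cons_self) v
    have hloop : Step (plus M) (M.length + 2, v ++ u) (2, v ++ u) :=
      step_plus_iff.2 (.inr (.inr ⟨rfl, .inl rfl, rfl⟩))
    simpa using (hblock.tail hloop).trans (ih (fun x hx => hws x (.tail u hx)) (v ++ u))

lemma exists_mem_lang_of_reflTransGen {ws : List (List α)} {w : List α}
    (h : ReflTransGen (Step M) (1, ws.flatten) (M.length + 1, w)) :
    ∃ u ∈ Lang M, w = (ws ++ [u]).flatten := by
  obtain ⟨u, rfl, hu⟩ := exists_eq_append_of_reflTransGen h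
  exact ⟨u, hu, by simp⟩

lemma Valid.reachable_plus (hM : Valid M) {c : ℤ × List α}
    (hc : ReflTransGen (Step (plus M)) (1, []) c) :
    c = (1, []) ∨
      (2 ≤ c.1 ∧ c.1 ≤ M.length + 2 ∧ ∃ ws : List (List α), (∀ u ∈ ws, u ∈ Lang M) ∧
        ReflTransGen (Step M) (1, ws.flatten) (c.1 - 1, c.2)) ∨
      (c.1 = M.length + 3 ∧ ∃ ws : List (List α), ws ≠ [] ∧ (∀ u ∈ ws, u ∈ Lang M) ∧
        c.2 = ws.flatten) := by
  induction hc with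
  | refl => exact .inl rfl
  | @tail b c _ hstep ih =>
    obtain ⟨s, w⟩ := b
    obtain ⟨t, w'⟩ := c
    dsimp only at ih ⊢
    rcases step_plus_iff.1 hstep with ⟨rfl, rfl, rfl⟩ | hstepM | ⟨rfl, ht, rfl⟩
    · rcases ih with h | ⟨h2, -⟩ | ⟨h3, -⟩
      · obtain ⟨-, rfl⟩ := Prod.mk.inj h
        exact .inr (.inl ⟨le_rfl, by omega, [], by simp, by norm_num [ReflTransGen.refl]⟩)
      all_goals omega
    · have hs := hstepM.state_bounds
      have ht := hM.step_bounds hstepM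
      dsimp only at hs ht
      rcases ih with h | ⟨-, -, ws, hws, hrun⟩ | ⟨h3, -⟩
      · simp only [Prod.mk.injEq] at h
        omega
      · exact .inr (.inl ⟨by omega, by omega, ws, hws, hrun.tail hstepM⟩)
      · omega
    · rcases ih with h | ⟨-, -, ws, hws, hrun⟩ | ⟨h3, -⟩
      · simp only [Prod.mk.injEq] at h
        omega
      · obtain ⟨u, hu, rfl⟩ := exists_mem_lang_of_reflTransGen (by convert hrun using 3; ring)
        have hwsu : ∀ x ∈ ws ++ [u], x ∈ Lang M := by
          simpa [or_imp, forall_and] using And.intro hws hu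
        rcases ht with rfl | rfl
        · exact .inr (.inl ⟨le_rfl, by omega, ws ++ [u], hwsu, by norm_num [ReflTransGen.refl]⟩)
        · exact .inr (.inr ⟨rfl, ws ++ [u], by simp, hwsu, rfl⟩)
      · omega

end Plus

end Acceptor

/-- `w ∈ L(A⁺)` iff `w` is a concatenation `w₁⋯w_k` with `k ≥ 1`
and all `wᵢ ∈ L(A)`. -/
theorem plus_lang {α : Type*} [LinearOrder α] [OrderBot α]
    (M : Acceptor α) (h : Acceptor.Valid M) (w : List α) :
    w ∈ Acceptor.Lang (Acceptor.plus M) ↔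
      ∃ ws : List (List α), ws ≠ [] ∧ (∀ u ∈ ws, u ∈ Acceptor.Lang M) ∧
        w = ws.flatten := by
  have hlen : ((Acceptor.plus M).length : ℤ) + 1 = M.length + 3 := by
    push_cast [Acceptor.plus_length]
    ring
  change Relation.ReflTransGen _ _ _ ↔ _
  rw [hlen]
  constructor
  · intro hw
    rcases h.reachable_plus hw with h1 | ⟨-, h2, -⟩ | ⟨-, hws⟩
    · simp only [Prod.mk.injEq] at h1
      omega
    · omega
    · exact hws
  · rintro ⟨_ | ⟨u, ws⟩, hne, hws, rfl⟩
    · exact absurd rfl hne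
    have hstart : Acceptor.Step (Acceptor.plus M) (1, []) (2, []) :=
      Acceptor.step_plus_iff.2 (.inl ⟨rfl, rfl, rfl⟩)
    have hfinish : Acceptor.Step (Acceptor.plus M) (M.length + 2, (u :: ws).flatten)
        (M.length + 3, (u :: ws).flatten) :=
      Acceptor.step_plus_iff.2 (.inr (.inr ⟨rfl, .inr rfl, rfl⟩))
    simpa using ((Acceptor.reflTransGen_plus_of_forall_mem_lang hws []).head hstart).tail hfinish
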